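/- Let Ω₁ ⊂ ℍₛⁿ be real-path-connected, Ω₂ real-path-connected and Ω₁-stem-preserving, Ω₃ Ω₂-stem-preserving, and f ∈ 𝒫𝒮(Ω₁), g ∈ 𝒫𝒮(Ω₂), h ∈ 𝒫𝒮(Ω₃). Then (f*g)*h = f*(g*h) as functions on Ω₁. -/

import Mathlib

noncomputable section
open Quaternion Matrix

abbrev Hq := Quaternion ℝ

/-- The set of quaternionic imaginary units. -/
def Sph : Set Hq := {I | I ^ 2 = -1}

/-- `Ψ_i^I` applied to a single complex number: `x + y i ↦ x + y I`. -/
def psi (I : Hq) (z : ℂ) : Hq := (z.re : Hq) + z.im • I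

/-- `Ψ_i^I : ℂⁿ → ℂ_Iⁿ`, componentwise. -/
def liftMap {n : ℕ} (I : Hq) (z : Fin n → ℂ) : Fin n → Hq := fun k => psi I (z k)

/-- The weakly slice cone `Hqₛⁿ = ⋃_{I∈𝕊} ℂ_Iⁿ`. -/
def HSn (n : ℕ) : Set (Fin n → Hq) := {q | ∃ I ∈ Sph, ∃ z : Fin n → ℂ, q = liftMap I z}

/-- A point of `ℂⁿ` is real. -/
def isRealPt {n : ℕ} (z : Fin n → ℂ) : Prop := ∀ k, (z k).im = 0

/-- A point of `Hqⁿ` is real. -/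
def isRealH {n : ℕ} (q : Fin n → Hq) : Prop := ∀ k, q k = ((q k).re : Hq)

/-- The lifted path `γ^I = Ψ_i^I ∘ γ`. -/
def liftP {n : ℕ} (γ : C(unitInterval, Fin n → ℂ)) (I : Hq) (t : unitInterval) : Fin n → Hq :=
  liftMap I (γ t)

/-- `𝕊(Ω, γ) = {I ∈ 𝕊 : γ^I ⊂ Ω}`. -/
def SUnits {n : ℕ} (Ω : Set (Fin n → Hq)) (γ : C(unitInterval, Fin n → ℂ)) : Set Hq :=
  {I | I ∈ Sph ∧ ∀ t, liftP γ I t ∈ Ω}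

/-- `𝒫(ℂⁿ, Ω)`: continuous paths starting in `ℝⁿ` with some lift inside `Ω`. -/
def PathsTo {n : ℕ} (Ω : Set (Fin n → Hq)) : Set C(unitInterval, Fin n → ℂ) :=
  {γ | isRealPt (γ 0) ∧ ∃ I, I ∈ SUnits Ω γ}

/-- `F` is a path-slice stem function of `f` on `Ω`:
`f(γ^I(1)) = (1, I)·F(γ)`. -/
def IsStem {n : ℕ} (Ω : Set (Fin n → Hq)) (f : (Fin n → Hq) → Hq)
    (F : C(unitInterval, Fin n → ℂ) → Fin 2 → Hq) : Prop :=
  ∀ γ ∈ PathsTo Ω, ∀ I ∈ SUnits Ω γ, f (liftP γ I 1) = F γ 0 + I * F γ 1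

/-- `f` is path-slice on `Ω`. -/
def IsPathSlice {n : ℕ} (Ω : Set (Fin n → Hq)) (f : (Fin n → Hq) → Hq) : Prop :=
  ∃ F, IsStem Ω f F

/-- `Ω` is real-path-connected. -/
def RealPathConnected {n : ℕ} (Ω : Set (Fin n → Hq)) : Prop :=
  ∀ q ∈ Ω, ∃ γ ∈ PathsTo Ω, ∃ I ∈ SUnits Ω γ, liftP γ I 1 = q

/-- `Ω₂` is `Ω₁`-stem-preserving: (i) every path of `𝒫(ℂⁿ,Ω₁)` has at least two
units in `𝕊(Ω₂,γ)`; (ii) two paths with the same endpoint share `≠ 1` units. -/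
def StemPreserving {n : ℕ} (Ω₁ Ω₂ : Set (Fin n → Hq)) : Prop :=
  (∀ γ ∈ PathsTo Ω₁, ∃ I ∈ SUnits Ω₂ γ, ∃ J ∈ SUnits Ω₂ γ, I ≠ J) ∧
  (∀ α ∈ PathsTo Ω₁, ∀ β ∈ PathsTo Ω₁, α 1 = β 1 →
    ∀ I ∈ SUnits Ω₂ α ∩ SUnits Ω₂ β, ∃ J ∈ SUnits Ω₂ α ∩ SUnits Ω₂ β, J ≠ I)

/-- The formula `((1,I),(1,J))⁻¹ (f(γ^I(1)), f(γ^J(1)))ᵀ`. -/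
def stemFormula {n : ℕ} (f : (Fin n → Hq) → Hq) (γ : C(unitInterval, Fin n → ℂ)) (I J : Hq) :
    Fin 2 → Hq :=
  ((I - J)⁻¹ • !![I, -J; (1 : Hq), -1]).mulVec ![f (liftP γ I 1), f (liftP γ J 1)]

/-- The sub-stem function `F_{Ω₁}^f` (depends only on `Ω₂` and `f`). -/
noncomputable def subStem {n : ℕ} (Ω₂ : Set (Fin n → Hq)) (f : (Fin n → Hq) → Hq)
    (γ : C(unitInterval, Fin n → ℂ)) : Fin 2 → Hq := by
  classical
  exact if h : ∃ p : Hq × Hq, p.1 ∈ SUnits Ω₂ γ ∧ p.2 ∈ SUnits Ω₂ γ ∧ p.1 ≠ p.2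
    then stemFormula f γ h.choose.1 h.choose.2
    else 0

/-- Normalized imaginary part of a quaternion. -/
def imUnit (a : Hq) : Hq := (‖a - (a.re : Hq)‖)⁻¹ • (a - (a.re : Hq))

/-- The map `𝔍 : Hqₛⁿ → 𝕊 ∪ {0}`. -/
noncomputable def Jmap {n : ℕ} (q : Fin n → Hq) : Hq := by
  classical
  exact if h : ∃ k : Fin n, q k ≠ ((q k).re : Hq) then
    imUnit (q ((Finset.univ.filter fun k => q k ≠ ((q k).re : Hq)).min'
      ⟨h.choose, Finset.mem_filter.2 ⟨Finset.mem_univ _, h.choose_spec⟩⟩))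
  else 0

/-- Componentwise complex conjugate of a path. -/
def conjPath {n : ℕ} (γ : C(unitInterval, Fin n → ℂ)) : C(unitInterval, Fin n → ℂ) :=
  ⟨fun t k => star (γ t k),
    continuous_pi fun k => continuous_star.comp ((continuous_apply k).comp γ.continuous)⟩

/-- The point-form sub-stem function `ℱ_{Ω₁}^f : Ω₁ → Hq^{2×1}`. -/
noncomputable def pointStem {n : ℕ} (Ω₁ Ω₂ : Set (Fin n → Hq)) (f : (Fin n → Hq) → Hq)
    (q : Fin n → Hq) : Fin 2 → Hq := by
  classical
  exact if isRealH q then ![f q, 0]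
    else if h : ∃ γ, γ ∈ PathsTo Ω₁ ∧ (∀ t, liftP γ (Jmap q) t ∈ Ω₁) ∧ liftP γ (Jmap q) 1 = q
    then subStem Ω₂ f h.choose
    else 0

/-- The `*`-product of functions: `(f*g)(q) = (f(q), 𝔍(q)f(q)) · ℱ_{Ω₁}^g(q)`. -/
noncomputable def starProd {n : ℕ} (Ω₁ Ω₂ : Set (Fin n → Hq)) (f g : (Fin n → Hq) → Hq)
    (q : Fin n → Hq) : Hq :=
  f q * pointStem Ω₁ Ω₂ g q 0 + (Jmap q * f q) * pointStem Ω₁ Ω₂ g q 1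

/-- The `*`-product on `Hq^{2×1}` coming from `Hq ⊗_ℝ ℂ`. -/
def vstar (p q : Fin 2 → Hq) : Fin 2 → Hq :=
  ![p 0 * q 0 - p 1 * q 1, p 1 * q 0 + p 0 * q 1]

/-- `Ω` is slice-open: a subset of `Hqₛⁿ` all of whose slices are open. -/
def SliceOpen {n : ℕ} (Ω : Set (Fin n → Hq)) : Prop :=
  Ω ⊆ HSn n ∧ ∀ I ∈ Sph, IsOpen {z : Fin n → ℂ | liftMap I z ∈ Ω}

/-- `Ω` is slice-connected. -/
def SliceConnected {n : ℕ} (Ω : Set (Fin n → Hq)) : Prop :=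
  ∀ U V : Set (Fin n → Hq), SliceOpen U → SliceOpen V → Ω ⊆ U ∪ V →
    (Ω ∩ U).Nonempty → (Ω ∩ V).Nonempty → (Ω ∩ U ∩ V).Nonempty

/-- `Ω` is a slice-domain. -/
def SliceDomain {n : ℕ} (Ω : Set (Fin n → Hq)) : Prop :=
  SliceOpen Ω ∧ SliceConnected Ω

/-- `Ω` is self-stem-preserving. -/
def SelfStemPreserving {n : ℕ} (Ω : Set (Fin n → Hq)) : Prop :=
  RealPathConnected Ω ∧ StemPreserving Ω Ω

/-- `Ω` is open in the Euclidean subspace topology of `Hqₛⁿ`. -/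
def EuclideanOpenIn {n : ℕ} (Ω : Set (Fin n → Hq)) : Prop :=
  ∃ U : Set (Fin n → Hq), IsOpen U ∧ Ω = U ∩ HSn n

/-- `Ω` is weakly axially symmetric. -/
def WeaklyAxiallySymmetric {n : ℕ} (Ω : Set (Fin n → Hq)) : Prop :=
  ∀ (x y : Fin n → ℝ) (I : Hq), I ∈ Sph →
    (fun k => (x k : Hq) + y k • I) ∈ Ω → (fun k => (x k : Hq) - y k • I) ∈ Ω

/-!
At a point `q = γ^I(1)` reached along any `γ ∈ 𝒫(ℂⁿ, Ω)` with `γ^I ⊂ Ω`, the product `(f * k)(q)`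
equals `(f(q), I f(q)) · K(γ)` for every stem `K` of `k`, whatever path `pointStem` picked: two
paths with a common endpoint and a common unit join into one path, which carries two common units
of `Ω'` and hence forces equal stems, while the conjugate path realises the unit `-I`.
Consequently `G * K` is a stem of `g * k`, and both sides of the associativity law reduce to
`(f(q), I f(q)) · (G(γ) * K(γ))`, because `I² = -1` makes `v ↦ (a, I a) · v` compatible with the
product of `ℍ ⊗_ℝ ℂ`.
-/

open Set

section Units

variable {I : Hq}

theorem mul_self_of_mem_Sph (hI : I ∈ Sph) : I * I = -1 := by
  rw [← sq]; exact hI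

theorem neg_mem_Sph (hI : I ∈ Sph) : -I ∈ Sph := by
  rw [Sph, mem_ofPred_eq, neg_sq]; exact hI

theorem ne_zero_of_mem_Sph (hI : I ∈ Sph) : I ≠ 0 := by
  rintro rfl
  simp [Sph] at hI

theorem norm_of_mem_Sph (hI : I ∈ Sph) : ‖I‖ = 1 := by
  have h : ‖I‖ ^ 2 = 1 := by rw [← norm_pow, hI, norm_neg, norm_one]
  exact (pow_eq_one_iff_of_nonneg (norm_nonneg I) two_ne_zero).1 h

theorem re_of_mem_Sph (hI : I ∈ Sph) : I.re = 0 := by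
  rw [← Quaternion.sq_eq_neg_normSq, Quaternion.normSq_eq_norm_mul_self, norm_of_mem_Sph hI,
    mul_one]
  exact hI

end Units

section Slices

variable {n : ℕ} {I : Hq}

theorem re_psi (hI : I ∈ Sph) (z : ℂ) : (psi I z).re = z.re := by
  simp [psi, re_of_mem_Sph hI]

theorem psi_sub_re (I : Hq) (z : ℂ) : psi I z - (z.re : Hq) = z.im • I := by
  rw [psi, add_sub_cancel_left]

theorem psi_of_im_eq_zero (I : Hq) {z : ℂ} (hz : z.im = 0) : psi I z = (z.re : Hq) := by
  simp [psi, hz]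

theorem smul_left_injective_of_mem_Sph (hI : I ∈ Sph) : Function.Injective fun c : ℝ => c • I :=
  smul_left_injective ℝ (ne_zero_of_mem_Sph hI)

theorem psi_injective (hI : I ∈ Sph) : Function.Injective (psi I) := by
  intro z w h
  have hre : z.re = w.re := by simpa [re_psi hI] using congrArg QuaternionAlgebra.re h
  have him : psi I z - (z.re : Hq) = psi I w - (w.re : Hq) := by rw [h, hre]
  rw [psi_sub_re, psi_sub_re] at him
  exact Complex.ext hre (smul_left_injective_of_mem_Sph hI him)

theorem im_eq_zero_of_psi_eq_re (hI : I ∈ Sph) {z : ℂ} (h : psi I z = ((psi I z).re : Hq)) :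
    z.im = 0 := by
  apply smul_left_injective_of_mem_Sph hI
  simp only [← psi_sub_re, ← re_psi hI z, ← h, sub_self, zero_smul]

theorem imUnit_psi (hI : I ∈ Sph) {z : ℂ} (hz : z.im ≠ 0) :
    imUnit (psi I z) = I ∨ imUnit (psi I z) = -I := by
  rw [imUnit, re_psi hI, psi_sub_re, norm_smul, norm_of_mem_Sph hI, mul_one, smul_smul,
    Real.norm_eq_abs]
  rcases hz.lt_or_gt with h | h
  · right; rw [abs_of_neg h, inv_neg, neg_mul, inv_mul_cancel₀ h.ne, neg_smul, one_smul]
  · left; rw [abs_of_pos h, inv_mul_cancel₀ h.ne', one_smul]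

theorem liftMap_injective (hI : I ∈ Sph) : Function.Injective (liftMap (n := n) I) :=
  fun _ _ h => funext fun k => psi_injective hI (congrFun h k)

theorem liftMap_eq_of_isRealPt {z : Fin n → ℂ} (hz : isRealPt z) (I J : Hq) :
    liftMap I z = liftMap J z :=
  funext fun k => by simp only [liftMap, psi_of_im_eq_zero _ (hz k)]

theorem isRealPt_of_isRealH_liftMap (hI : I ∈ Sph) {z : Fin n → ℂ}
    (h : isRealH (liftMap I z)) : isRealPt z :=
  fun k => im_eq_zero_of_psi_eq_re hI (h k)

theorem Jmap_of_isRealH {q : Fin n → Hq} (hq : isRealH q) : Jmap q = 0 := by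
  rw [Jmap, dif_neg (not_exists.2 fun k hk => hk (hq k))]

theorem Jmap_liftMap (hI : I ∈ Sph) {z : Fin n → ℂ} (hq : ¬ isRealH (liftMap I z)) :
    Jmap (liftMap I z) = I ∨ Jmap (liftMap I z) = -I := by
  classical
  have h : ∃ k, liftMap I z k ≠ ((liftMap I z k).re : Hq) := by simpa [isRealH] using hq
  rw [Jmap, dif_pos h]
  have hk : ∀ k ∈ Finset.univ.filter fun k => liftMap I z k ≠ ((liftMap I z k).re : Hq),
      imUnit (liftMap I z k) = I ∨ imUnit (liftMap I z k) = -I := fun k hk =>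
    imUnit_psi hI fun him => (Finset.mem_filter.1 hk).2 (by
      simp [liftMap, psi_of_im_eq_zero I him])
  exact hk _ (Finset.min'_mem _ _)

end Slices

section Paths

variable {n : ℕ} {Ω : Set (Fin n → Hq)} {γ : C(unitInterval, Fin n → ℂ)} {I : Hq}

theorem liftP_conjPath (γ : C(unitInterval, Fin n → ℂ)) (I : Hq) :
    liftP (conjPath γ) (-I) = liftP γ I := by
  funext t k
  simp [liftP, liftMap, psi, conjPath]

theorem neg_mem_SUnits_conjPath (hI : I ∈ SUnits Ω γ) : -I ∈ SUnits Ω (conjPath γ) :=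
  ⟨neg_mem_Sph hI.1, by rw [liftP_conjPath]; exact hI.2⟩

theorem conjPath_mem_PathsTo (hγ : γ ∈ PathsTo Ω) : conjPath γ ∈ PathsTo Ω := by
  obtain ⟨h0, I, hI⟩ := hγ
  exact ⟨fun k => by simp [conjPath, h0 k], -I, neg_mem_SUnits_conjPath hI⟩

theorem mem_SUnits_iff_range : I ∈ SUnits Ω γ ↔ I ∈ Sph ∧ range γ ⊆ liftMap I ⁻¹' Ω := by
  simp [SUnits, liftP, range_subset_iff]

def ContinuousMap.joinRev {X : Type*} [TopologicalSpace X] (α β : C(unitInterval, X))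
    (h : α 1 = β 1) : C(unitInterval, X) :=
  ((⟨α, rfl, rfl⟩ : Path (α 0) (α 1)).trans (⟨β, rfl, h.symm⟩ : Path (β 0) (α 1)).symm).1

theorem ContinuousMap.joinRev_zero {X : Type*} [TopologicalSpace X] (α β : C(unitInterval, X))
    (h : α 1 = β 1) : α.joinRev β h 0 = α 0 :=
  Path.source _

theorem ContinuousMap.range_joinRev {X : Type*} [TopologicalSpace X] (α β : C(unitInterval, X))
    (h : α 1 = β 1) : range (α.joinRev β h) = range α ∪ range β :=
  (Path.trans_range _ _).trans (by rw [Path.symm_range]; rfl)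

theorem mem_SUnits_joinRev {α β : C(unitInterval, Fin n → ℂ)} (h : α 1 = β 1) :
    I ∈ SUnits Ω (α.joinRev β h) ↔ I ∈ SUnits Ω α ∧ I ∈ SUnits Ω β := by
  simp only [mem_SUnits_iff_range, ContinuousMap.range_joinRev, union_subset_iff]
  tauto

end Paths

theorem eq_of_add_mul_eq_add_mul {R : Type*} [Ring R] [NoZeroDivisors R] {I J : R} (hIJ : I ≠ J)
    {v w : Fin 2 → R} (hI : v 0 + I * v 1 = w 0 + I * w 1) (hJ : v 0 + J * v 1 = w 0 + J * w 1) :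
    v = w := by
  have h₁ : (I - J) * v 1 = (I - J) * w 1 := by
    have := congrArg₂ (· - ·) hI hJ
    simp only [add_sub_add_left_eq_sub, ← sub_mul] at this
    exact this
  have h₁ := mul_left_cancel₀ (sub_ne_zero.2 hIJ) h₁
  have h₀ : v 0 = w 0 := by rwa [h₁, add_left_inj] at hI
  exact funext (Fin.forall_fin_two.2 ⟨h₀, h₁⟩)

def HasTwoUnits {n : ℕ} (Ω Ω' : Set (Fin n → Hq)) : Prop :=
  ∀ γ ∈ PathsTo Ω, ∃ I ∈ SUnits Ω' γ, ∃ J ∈ SUnits Ω' γ, I ≠ J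

theorem StemPreserving.hasTwoUnits {n : ℕ} {Ω Ω' : Set (Fin n → Hq)} (h : StemPreserving Ω Ω') :
    HasTwoUnits Ω Ω' :=
  h.1

theorem HasTwoUnits.trans {n : ℕ} {Ω₁ Ω₂ Ω₃ : Set (Fin n → Hq)} (h₁₂ : HasTwoUnits Ω₁ Ω₂)
    (h₂₃ : HasTwoUnits Ω₂ Ω₃) : HasTwoUnits Ω₁ Ω₃ := fun γ hγ => by
  obtain ⟨I, hI, -⟩ := h₁₂ γ hγ
  exact h₂₃ γ ⟨hγ.1, I, hI⟩

namespace IsStem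

variable {n : ℕ} {Ω Ω' : Set (Fin n → Hq)} {k : (Fin n → Hq) → Hq}
  {K : C(unitInterval, Fin n → ℂ) → Fin 2 → Hq} {γ : C(unitInterval, Fin n → ℂ)}

theorem stemFormula_eq (hK : IsStem Ω' k K) (hγ : isRealPt (γ 0)) {I J : Hq}
    (hI : I ∈ SUnits Ω' γ) (hJ : J ∈ SUnits Ω' γ) (hIJ : I ≠ J) :
    stemFormula k γ I J = K γ := by
  have hII := mul_self_of_mem_Sph hI.1
  have hJJ := mul_self_of_mem_Sph hJ.1
  have hM :
      !![I, -J; (1 : Hq), -1] *ᵥ ![K γ 0 + I * K γ 1, K γ 0 + J * K γ 1] = (I - J) • K γ := by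
    funext i
    fin_cases i
    · simp only [Matrix.mulVec, dotProduct, Fin.sum_univ_two, Fin.zero_eta, Matrix.of_apply,
        Matrix.cons_val', Matrix.cons_val_fin_one, Matrix.cons_val_zero, Matrix.cons_val_one,
        mul_add, ← mul_assoc, hII, hJJ, neg_mul, one_mul, neg_neg, Pi.smul_apply, smul_eq_mul]
      noncomm_ring
    · simp only [Matrix.mulVec, dotProduct, Fin.sum_univ_two, Fin.mk_one, Matrix.of_apply,
        Matrix.cons_val', Matrix.cons_val_fin_one, Matrix.cons_val_zero, Matrix.cons_val_one,
        one_mul, neg_mul, Pi.smul_apply, smul_eq_mul]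
      noncomm_ring
  rw [stemFormula, hK γ ⟨hγ, I, hI⟩ I hI, hK γ ⟨hγ, I, hI⟩ J hJ, Matrix.smul_mulVec, hM,
    smul_smul, inv_mul_cancel₀ (sub_ne_zero.2 hIJ), one_smul]

theorem subStem_eq (hK : IsStem Ω' k K) (hγ : isRealPt (γ 0))
    (hunits : ∃ I ∈ SUnits Ω' γ, ∃ J ∈ SUnits Ω' γ, I ≠ J) : subStem Ω' k γ = K γ := by
  have h : ∃ p : Hq × Hq, p.1 ∈ SUnits Ω' γ ∧ p.2 ∈ SUnits Ω' γ ∧ p.1 ≠ p.2 := by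
    obtain ⟨I, hI, J, hJ, hIJ⟩ := hunits
    exact ⟨(I, J), hI, hJ, hIJ⟩
  rw [subStem, dif_pos h]
  exact hK.stemFormula_eq hγ h.choose_spec.1 h.choose_spec.2.1 h.choose_spec.2.2

theorem eq_of_endpoint_eq (hΩ : HasTwoUnits Ω Ω') (hK : IsStem Ω' k K)
    {α β : C(unitInterval, Fin n → ℂ)} (hα : α ∈ PathsTo Ω) (hβ : β ∈ PathsTo Ω) (hαβ : α 1 = β 1)
    {I : Hq} (hIα : I ∈ SUnits Ω α) (hIβ : I ∈ SUnits Ω β) : K α = K β := by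
  have hc : α.joinRev β hαβ ∈ PathsTo Ω :=
    ⟨by rw [ContinuousMap.joinRev_zero]; exact hα.1, I, (mem_SUnits_joinRev hαβ).2 ⟨hIα, hIβ⟩⟩
  obtain ⟨L, hL, L', hL', hLL'⟩ := hΩ _ hc
  rw [mem_SUnits_joinRev] at hL hL'
  have hlift (M : Hq) : liftP α M 1 = liftP β M 1 := by rw [liftP, liftP, hαβ]
  apply eq_of_add_mul_eq_add_mul hLL'
  · rw [← hK α ⟨hα.1, L, hL.1⟩ L hL.1, ← hK β ⟨hβ.1, L, hL.2⟩ L hL.2, hlift]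
  · rw [← hK α ⟨hα.1, L, hL.1⟩ L' hL'.1, ← hK β ⟨hβ.1, L, hL.2⟩ L' hL'.2, hlift]

theorem conjPath_eq (hΩ : HasTwoUnits Ω Ω') (hK : IsStem Ω' k K) (hγ : γ ∈ PathsTo Ω) :
    K (conjPath γ) = ![K γ 0, -K γ 1] := by
  obtain ⟨I, hI, J, hJ, hIJ⟩ := hΩ γ hγ
  have hγ' : γ ∈ PathsTo Ω' := ⟨hγ.1, I, hI⟩
  have hc : conjPath γ ∈ PathsTo Ω' := conjPath_mem_PathsTo hγ'
  have e {M : Hq} (hM : M ∈ SUnits Ω' γ) :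
      K (conjPath γ) 0 + -M * K (conjPath γ) 1 = K γ 0 + M * K γ 1 := by
    rw [← hK _ hc _ (neg_mem_SUnits_conjPath hM), liftP_conjPath, hK γ hγ' M hM]
  apply eq_of_add_mul_eq_add_mul (neg_injective.ne hIJ)
  · simpa using e hI
  · simpa using e hJ

theorem eq_of_isRealPt (hΩ : HasTwoUnits Ω Ω') (hK : IsStem Ω' k K) (hγ : γ ∈ PathsTo Ω)
    (hγ1 : isRealPt (γ 1)) (I : Hq) : K γ = ![k (liftP γ I 1), 0] := by
  obtain ⟨L, hL, L', hL', hLL'⟩ := hΩ γ hγ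
  have hlift (M : Hq) : liftP γ M 1 = liftP γ I 1 := liftMap_eq_of_isRealPt hγ1 M I
  have e {M : Hq} (hM : M ∈ SUnits Ω' γ) : K γ 0 + M * K γ 1 = k (liftP γ I 1) := by
    rw [← hlift M, hK γ ⟨hγ.1, L, hL⟩ M hM]
  apply eq_of_add_mul_eq_add_mul hLL' <;> simp [e hL, e hL']

theorem pointStem_eq (hΩ : HasTwoUnits Ω Ω') (hK : IsStem Ω' k K) {q : Fin n → Hq}
    (hq : ¬ isRealH q) (hγ : γ ∈ PathsTo Ω) (hJ : Jmap q ∈ SUnits Ω γ)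
    (hγq : liftP γ (Jmap q) 1 = q) : pointStem Ω Ω' k q = K γ := by
  have hE : ∃ γ', γ' ∈ PathsTo Ω ∧ (∀ t, liftP γ' (Jmap q) t ∈ Ω) ∧ liftP γ' (Jmap q) 1 = q :=
    ⟨γ, hγ, hJ.2, hγq⟩
  obtain ⟨hγ', hJ', hγ'q⟩ := hE.choose_spec
  rw [pointStem, if_neg hq, dif_pos hE, hK.subStem_eq hγ'.1 (hΩ _ hγ')]
  exact hK.eq_of_endpoint_eq hΩ hγ' hγ (liftMap_injective hJ.1 (hγ'q.trans hγq.symm))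
    ⟨hJ.1, hJ'⟩ hJ

end IsStem

def sliceAct (a J : Hq) (v : Fin 2 → Hq) : Hq := a * v 0 + (J * a) * v 1

theorem starProd_eq_sliceAct {n : ℕ} (Ω Ω' : Set (Fin n → Hq)) (f g : (Fin n → Hq) → Hq)
    (q : Fin n → Hq) : starProd Ω Ω' f g q = sliceAct (f q) (Jmap q) (pointStem Ω Ω' g q) :=
  rfl

theorem one_sliceAct (J : Hq) (v : Fin 2 → Hq) : sliceAct 1 J v = v 0 + J * v 1 := by
  simp [sliceAct]

theorem sliceAct_neg (a J : Hq) (v : Fin 2 → Hq) :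
    sliceAct a (-J) ![v 0, -v 1] = sliceAct a J v := by
  simp [sliceAct]

theorem sliceAct_sliceAct {a J : Hq} (hJ : J * J = -1) (v w : Fin 2 → Hq) :
    sliceAct (sliceAct a J v) J w = sliceAct a J (vstar v w) := by
  have hJJ (x : Hq) : J * (J * x) = -x := by rw [← mul_assoc, hJ, neg_one_mul]
  simp only [sliceAct, vstar, Matrix.cons_val_zero, Matrix.cons_val_one, mul_add, add_mul,
    mul_sub, mul_assoc, hJJ]
  noncomm_ring

theorem starProd_liftP {n : ℕ} {Ω Ω' : Set (Fin n → Hq)} {k : (Fin n → Hq) → Hq}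
    {K : C(unitInterval, Fin n → ℂ) → Fin 2 → Hq} (hΩ : HasTwoUnits Ω Ω') (hK : IsStem Ω' k K)
    (f : (Fin n → Hq) → Hq) {γ : C(unitInterval, Fin n → ℂ)} (hγ : γ ∈ PathsTo Ω) {I : Hq}
    (hI : I ∈ SUnits Ω γ) :
    starProd Ω Ω' f k (liftP γ I 1) = sliceAct (f (liftP γ I 1)) I (K γ) := by
  rw [starProd_eq_sliceAct]
  by_cases hre : isRealH (liftP γ I 1)
  · rw [pointStem, if_pos hre, Jmap_of_isRealH hre,
      hK.eq_of_isRealPt hΩ hγ (isRealPt_of_isRealH_liftMap hI.1 hre) I]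
    simp [sliceAct]
  · have hJ : Jmap (liftP γ I 1) = I ∨ Jmap (liftP γ I 1) = -I := Jmap_liftMap hI.1 hre
    rcases hJ with hJ | hJ
    · rw [hK.pointStem_eq hΩ hre hγ (by rwa [hJ]) (by rw [hJ]), hJ]
    · rw [hK.pointStem_eq hΩ hre (conjPath_mem_PathsTo hγ)
        (by rw [hJ]; exact neg_mem_SUnits_conjPath hI) (by rw [hJ, liftP_conjPath]),
        hK.conjPath_eq hΩ hγ, hJ, sliceAct_neg]

theorem IsStem.starProd {n : ℕ} {Ω₂ Ω₃ : Set (Fin n → Hq)} (h₂₃ : HasTwoUnits Ω₂ Ω₃)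
    {g k : (Fin n → Hq) → Hq} {G K : C(unitInterval, Fin n → ℂ) → Fin 2 → Hq}
    (hG : IsStem Ω₂ g G) (hK : IsStem Ω₃ k K) :
    IsStem Ω₂ (starProd Ω₂ Ω₃ g k) fun γ => vstar (G γ) (K γ) := by
  intro γ hγ I hI
  rw [starProd_liftP h₂₃ hK g hγ hI, hG γ hγ I hI, ← one_sliceAct I (G γ),
    sliceAct_sliceAct (mul_self_of_mem_Sph hI.1), one_sliceAct]

theorem starProd_assoc_general {n : ℕ} (Ω₁ Ω₂ Ω₃ : Set (Fin n → Hq))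
    (h₁ : RealPathConnected Ω₁)
    (h₁₂ : StemPreserving Ω₁ Ω₂) (h₂₃ : StemPreserving Ω₂ Ω₃)
    (f g k : (Fin n → Hq) → Hq)
    (hg : IsPathSlice Ω₂ g) (hk : IsPathSlice Ω₃ k) :
    ∀ q ∈ Ω₁, starProd Ω₁ Ω₃ (starProd Ω₁ Ω₂ f g) k q
      = starProd Ω₁ Ω₂ f (starProd Ω₂ Ω₃ g k) q := by
  obtain ⟨G, hG⟩ := hg
  obtain ⟨K, hK⟩ := hk
  intro q hq
  obtain ⟨γ, hγ, I, hI, rfl⟩ := h₁ q hq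
  have h₁₃ : HasTwoUnits Ω₁ Ω₃ := h₁₂.hasTwoUnits.trans h₂₃.hasTwoUnits
  rw [starProd_liftP h₁₃ hK _ hγ hI, starProd_liftP h₁₂.hasTwoUnits hG f hγ hI,
    starProd_liftP h₁₂.hasTwoUnits (hG.starProd h₂₃.hasTwoUnits hK) f hγ hI,
    sliceAct_sliceAct (mul_self_of_mem_Sph hI.1)]

/-- associativity of the `*`-product: `(f*g)*k = f*(g*k)` on `Ω₁`. -/
theorem starProd_assoc {n : ℕ} (Ω₁ Ω₂ Ω₃ : Set (Fin n → Hq))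
    (h₁ : RealPathConnected Ω₁) (h₂ : RealPathConnected Ω₂)
    (h₁₂ : StemPreserving Ω₁ Ω₂) (h₂₃ : StemPreserving Ω₂ Ω₃)
    (f g k : (Fin n → Hq) → Hq)
    (hf : IsPathSlice Ω₁ f) (hg : IsPathSlice Ω₂ g) (hk : IsPathSlice Ω₃ k) :
    ∀ q ∈ Ω₁, starProd Ω₁ Ω₃ (starProd Ω₁ Ω₂ f g) k q
      = starProd Ω₁ Ω₂ f (starProd Ω₂ Ω₃ g k) q :=
  starProd_assoc_general Ω₁ Ω₂ Ω₃ h₁ h₁₂ h₂₃ f g k hg hk
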